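/- arXiv:1001.5243 — 2 statements merged into one kernel-verified Lean document; each statement's English description precedes it below -/
import Mathlib

section
/- Let α, β ∈ V satisfy ⟨α,α⟩ < 0, ⟨β,β⟩ < 0 and ⟨α,β⟩ < 0, and assume there exists γ ∈ V with ⟨γ,γ⟩ > 0, ⟨γ,L⟩ > 0, ⟨α,γ⟩ ≤ 0 and ⟨β,γ⟩ ≥ 0. Then the following are equivalent: (j) β lies in the topological interior of the set Q̄ + ℝ_{≥0}·α = {q + tα : q ∈ Q̄, t ≥ 0}; (jj) the equation ⟨tβ − α, tβ − α⟩ = 0 has two distinct real solutions t (equivalently, ⟨α,β⟩² > ⟨α,α⟩·⟨β,β⟩); (jjj) every nonzero δ ∈ V with ⟨δ,δ⟩ ≥ 0, ⟨δ,L⟩ ≥ 0 and ⟨δ,β⟩ = 0 satisfies ⟨δ,α⟩ < 0. -/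
open scoped BigOperators

/-- The Minkowski intersection form of signature (1,r) on `ℝ^{r+1}`:
`⟨u,v⟩ = u₀v₀ − u₁v₁ − ⋯ − u_r v_r`. -/
noncomputable def mform (r : ℕ) (u v : Fin (r + 1) → ℝ) : ℝ :=
  u 0 * v 0 - ∑ i : Fin r, u i.succ * v i.succ

/-- The class `L = (1,0,…,0)` of a line. -/
def lclass (r : ℕ) : Fin (r + 1) → ℝ := fun i => if i = 0 then 1 else 0

/-- The canonical class `K = (−3,1,…,1)`. -/
def kclass (r : ℕ) : Fin (r + 1) → ℝ := fun i => if i = 0 then -3 else 1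

/-- `Q = {α : ⟨α,α⟩ ≥ 0, ⟨α,L⟩ > 0}`. -/
def Qset (r : ℕ) : Set (Fin (r + 1) → ℝ) :=
  {α | 0 ≤ mform r α α ∧ 0 < mform r α (lclass r)}

/-- `Q̄ = {α : ⟨α,α⟩ ≥ 0, ⟨α,L⟩ ≥ 0}`. -/
def Qbar (r : ℕ) : Set (Fin (r + 1) → ℝ) :=
  {α | 0 ≤ mform r α α ∧ 0 ≤ mform r α (lclass r)}

/-!
Write `A = ⟨α,α⟩`, `B = ⟨α,β⟩`, `C = ⟨β,β⟩`; condition (jj) says that the discriminant of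
`C t² − 2B t + A` is positive, i.e. `AC < B²`.

If `AC < B²`, then `β − (C/B) α` is timelike and pairs nonnegatively with `γ`, so it lies in the
open cone `Q°`, and `β ∈ Q° + (C/B) α`, an open subset of `Q̄ + ℝ≥0·α`.
If `β` is interior and `δ` is as in (jjj) but `⟨δ,α⟩ ≥ 0`, then `⟨δ,·⟩` is nonnegative on
`Q̄ + ℝ≥0·α` (reverse Cauchy–Schwarz on `Q̄`) and vanishes at `β`: a linear functional with a local
minimum, hence zero, so `δ = 0`.
If `B² ≤ AC`, the span of `α, β` is negative semidefinite, and its orthogonal complement contains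
a nonzero causal vector; with the right time orientation it violates (jjj).
-/

lemma exists_ne_quadratic_eq_zero_iff {a b c : ℝ} (ha : a ≠ 0) :
    (∃ x y, x ≠ y ∧ a * (x * x) + b * x + c = 0 ∧ a * (y * y) + b * y + c = 0) ↔
      0 < discrim a b c := by
  constructor
  · rintro ⟨x, y, hxy, hx, hy⟩
    rw [quadratic_eq_zero_iff_discrim_eq_sq ha] at hx hy
    by_contra! h
    have hx0 : 2 * a * x + b = 0 := sq_eq_zero_iff.1 (le_antisymm (hx ▸ h) (sq_nonneg _))
    have hy0 : 2 * a * y + b = 0 := sq_eq_zero_iff.1 (le_antisymm (hy ▸ h) (sq_nonneg _))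
    exact hxy (mul_left_cancel₀ (mul_ne_zero two_ne_zero ha) (by linarith))
  · intro hD
    have hs : discrim a b c = √(discrim a b c) * √(discrim a b c) :=
      (Real.mul_self_sqrt hD.le).symm
    have hs0 : 0 < √(discrim a b c) := Real.sqrt_pos.2 hD
    refine ⟨_, _, ?_, (quadratic_eq_zero_iff ha hs _).2 (Or.inl rfl),
      (quadratic_eq_zero_iff ha hs _).2 (Or.inr rfl)⟩
    intro h
    field_simp at h
    linarith

variable {r : ℕ}

lemma mform_comm (u v : Fin (r + 1) → ℝ) : mform r u v = mform r v u := by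
  simp [mform, mul_comm]

lemma mform_add_left (u v w : Fin (r + 1) → ℝ) :
    mform r (u + v) w = mform r u w + mform r v w := by
  simp only [mform, Pi.add_apply, add_mul, Finset.sum_add_distrib]; ring

lemma mform_smul_left (c : ℝ) (u w : Fin (r + 1) → ℝ) :
    mform r (c • u) w = c * mform r u w := by
  simp only [mform, Pi.smul_apply, smul_eq_mul, mul_sub, Finset.mul_sum, mul_assoc]

lemma mform_neg_left (u w : Fin (r + 1) → ℝ) : mform r (-u) w = -mform r u w := by
  simpa using mform_smul_left (-1) u w

lemma mform_sub_left (u v w : Fin (r + 1) → ℝ) :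
    mform r (u - v) w = mform r u w - mform r v w := by
  rw [sub_eq_add_neg, mform_add_left, mform_neg_left, sub_eq_add_neg]

lemma mform_add_right (w u v : Fin (r + 1) → ℝ) :
    mform r w (u + v) = mform r w u + mform r w v := by
  rw [mform_comm, mform_add_left, mform_comm u, mform_comm v]

lemma mform_smul_right (c : ℝ) (w u : Fin (r + 1) → ℝ) :
    mform r w (c • u) = c * mform r w u := by
  rw [mform_comm, mform_smul_left, mform_comm]

lemma mform_neg_right (w u : Fin (r + 1) → ℝ) : mform r w (-u) = -mform r w u := by
  rw [mform_comm, mform_neg_left, mform_comm]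

lemma mform_sub_right (w u v : Fin (r + 1) → ℝ) :
    mform r w (u - v) = mform r w u - mform r w v := by
  rw [mform_comm, mform_sub_left, mform_comm u, mform_comm v]

lemma mform_lclass (u : Fin (r + 1) → ℝ) : mform r u (lclass r) = u 0 := by
  simp [mform, lclass]

lemma mform_self_sub_smul (α β : Fin (r + 1) → ℝ) (t : ℝ) :
    mform r (t • β - α) (t • β - α) =
      mform r β β * (t * t) + (-2 * mform r α β) * t + mform r α α := by
  simp only [mform_sub_left, mform_sub_right, mform_smul_left, mform_smul_right,
    mform_comm β α]
  ring

lemma ne_zero_of_mform_self_pos {u : Fin (r + 1) → ℝ} (hu : 0 < mform r u u) : u ≠ 0 := by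
  rintro rfl
  simp [mform] at hu

lemma eq_zero_of_forall_mform_eq_zero {δ : Fin (r + 1) → ℝ} (h : ∀ v, mform r δ v = 0) :
    δ = 0 := by
  funext i
  cases i using Fin.cases with
  | zero => simpa [mform] using h (Pi.single 0 1)
  | succ i => simpa [mform, Pi.single_apply] using h (Pi.single i.succ 1)

lemma mform_self_le_sq (u : Fin (r + 1) → ℝ) : mform r u u ≤ u 0 ^ 2 := by
  have : 0 ≤ ∑ i : Fin r, u i.succ * u i.succ := Finset.sum_nonneg fun i _ => mul_self_nonneg _
  simp only [mform]
  nlinarith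

/-- Cauchy–Schwarz for the spatial parts `(u₁,…,u_r)` and `(v₁,…,v_r)`. -/
lemma sq_sub_mform_le (u v : Fin (r + 1) → ℝ) :
    (u 0 * v 0 - mform r u v) ^ 2 ≤ (u 0 ^ 2 - mform r u u) * (v 0 ^ 2 - mform r v v) := by
  have := Finset.sum_mul_sq_le_sq_mul_sq Finset.univ (fun i : Fin r => u i.succ)
    (fun i : Fin r => v i.succ)
  simpa [mform, pow_two] using this

lemma mform_nonneg_of_mem_Qbar {u v : Fin (r + 1) → ℝ} (hu : u ∈ Qbar r) (hv : v ∈ Qbar r) :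
    0 ≤ mform r u v := by
  obtain ⟨huu, hu0⟩ := hu
  obtain ⟨hvv, hv0⟩ := hv
  rw [mform_lclass] at hu0 hv0
  have hsq : (u 0 * v 0 - mform r u v) ^ 2 ≤ (u 0 * v 0) ^ 2 := by
    refine (sq_sub_mform_le u v).trans ?_
    rw [mul_pow]
    exact mul_le_mul (sub_le_self _ huu) (sub_le_self _ hvv)
      (sub_nonneg.2 (mform_self_le_sq v)) (sq_nonneg _)
  linarith [(abs_le_of_sq_le_sq' hsq (mul_nonneg hu0 hv0)).2]

/-- `Q°`, the interior of `Q̄`. -/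
def Qint (r : ℕ) : Set (Fin (r + 1) → ℝ) :=
  {α | 0 < mform r α α ∧ 0 < mform r α (lclass r)}

lemma Qint_subset_Qbar : Qint r ⊆ Qbar r := fun _ h => ⟨h.1.le, h.2.le⟩

lemma isOpen_Qint : IsOpen (Qint r) := by
  have hself : Continuous fun u : Fin (r + 1) → ℝ => mform r u u := by
    unfold mform; fun_prop
  have hL : Continuous fun u : Fin (r + 1) → ℝ => mform r u (lclass r) := by
    unfold mform; fun_prop
  exact (isOpen_lt continuous_const hself).inter (isOpen_lt continuous_const hL)

lemma mform_lclass_pos_of_mform_nonneg {u v : Fin (r + 1) → ℝ} (huu : 0 < mform r u u)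
    (hv : v ∈ Qint r) (huv : 0 ≤ mform r u v) : 0 < mform r u (lclass r) := by
  obtain ⟨hvv, hv0⟩ := hv
  rw [mform_lclass] at hv0 ⊢
  by_contra! hu0
  -- Then `u₀v₀ ≤ 0`, while Cauchy–Schwarz bounds the spatial part strictly by `|u₀v₀|`.
  have hcs := sq_sub_mform_le u v
  have hu := mform_self_le_sq u
  have hv := mform_self_le_sq v
  nlinarith [mul_nonpos_of_nonpos_of_nonneg hu0 hv0.le]

/-- The cone `Q̄ + ℝ≥0·α`. -/
def QbarAddRay (r : ℕ) (α : Fin (r + 1) → ℝ) : Set (Fin (r + 1) → ℝ) :=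
  {x | ∃ q ∈ Qbar r, ∃ t : ℝ, 0 ≤ t ∧ x = q + t • α}

lemma add_smul_mem_interior_QbarAddRay {α q : Fin (r + 1) → ℝ} {t : ℝ} (hq : q ∈ Qint r)
    (ht : 0 ≤ t) : q + t • α ∈ interior (QbarAddRay r α) := by
  have hopen : IsOpen ((fun x => x - t • α) ⁻¹' Qint r) :=
    isOpen_Qint.preimage (continuous_id.sub continuous_const)
  have hsub : (fun x => x - t • α) ⁻¹' Qint r ⊆ QbarAddRay r α :=
    fun x hx => ⟨x - t • α, Qint_subset_Qbar hx, t, ht, by abel⟩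
  exact interior_maximal hsub hopen (by simpa using hq)

noncomputable def mformCLM (r : ℕ) (δ : Fin (r + 1) → ℝ) : (Fin (r + 1) → ℝ) →L[ℝ] ℝ :=
  LinearMap.toContinuousLinearMap
    { toFun := mform r δ
      map_add' := mform_add_right δ
      map_smul' := fun c v => mform_smul_right c δ v }

lemma mformCLM_apply (δ v : Fin (r + 1) → ℝ) : mformCLM r δ v = mform r δ v := rfl

/-- A linear functional with a local minimum is zero; the form is nondegenerate. -/
lemma eq_zero_of_eventually_mform_nonneg {δ x : Fin (r + 1) → ℝ}
    (hx : ∀ᶠ y in nhds x, 0 ≤ mform r δ y) (hδx : mform r δ x = 0) : δ = 0 := by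
  have hmin : IsLocalMin (mformCLM r δ) x := hx.mono fun y hy => by
    simpa only [mformCLM_apply, hδx] using hy
  have hzero := hmin.hasFDerivAt_eq_zero (mformCLM r δ).hasFDerivAt
  exact eq_zero_of_forall_mform_eq_zero fun v => by
    simpa only [mformCLM_apply, zero_apply] using DFunLike.congr_fun hzero v

lemma mform_neg_of_mem_interior_QbarAddRay {α β δ : Fin (r + 1) → ℝ}
    (hβ : β ∈ interior (QbarAddRay r α)) (hδ0 : δ ≠ 0) (hδ : δ ∈ Qbar r)
    (hδβ : mform r δ β = 0) : mform r δ α < 0 := by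
  by_contra! hδα
  refine hδ0 (eq_zero_of_eventually_mform_nonneg ?_ hδβ)
  filter_upwards [mem_interior_iff_mem_nhds.1 hβ]
  rintro _ ⟨q, hq, t, ht, rfl⟩
  rw [mform_add_right, mform_smul_right]
  exact add_nonneg (mform_nonneg_of_mem_Qbar hδ hq) (mul_nonneg ht hδα)

lemma mem_interior_QbarAddRay {α β γ : Fin (r + 1) → ℝ} (hββ : mform r β β < 0)
    (hαβ : mform r α β < 0) (hγ : γ ∈ Qint r) (hαγ : mform r α γ ≤ 0) (hβγ : 0 ≤ mform r β γ)
    (hD : mform r α α * mform r β β < mform r α β ^ 2) :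
    β ∈ interior (QbarAddRay r α) := by
  set s := mform r β β / mform r α β
  have hs : 0 < s := div_pos_of_neg_of_neg hββ hαβ
  have hαβ0 : mform r α β ≠ 0 := hαβ.ne
  have hqq : 0 < mform r (β - s • α) (β - s • α) := by
    have hval : mform r (β - s • α) (β - s • α) =
        mform r β β * (mform r α α * mform r β β - mform r α β ^ 2) / mform r α β ^ 2 := by
      simp only [s, mform_sub_left, mform_sub_right, mform_smul_left, mform_smul_right,
        mform_comm β α]
      field_simp
      ring
    rw [hval]
    exact div_pos (mul_pos_of_neg_of_neg hββ (by linarith)) (sq_pos_of_neg hαβ)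
  have hqγ : 0 ≤ mform r (β - s • α) γ := by
    rw [mform_sub_left, mform_smul_left]
    linarith [mul_nonpos_of_nonneg_of_nonpos hs.le hαγ]
  have hq : β - s • α ∈ Qint r := ⟨hqq, mform_lclass_pos_of_mform_nonneg hqq hγ hqγ⟩
  simpa using add_smul_mem_interior_QbarAddRay (α := α) hq hs.le

lemma exists_timelike_orthogonal {β : Fin (r + 1) → ℝ} (hββ : mform r β β < 0) :
    ∃ p, 0 < mform r p p ∧ mform r p β = 0 := by
  -- `-⟨β,β⟩` times the projection of `L` onto `β^⊥`
  set p := β 0 • β - mform r β β • lclass r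
  have hpβ : mform r p β = 0 := by
    rw [mform_sub_left, mform_smul_left, mform_smul_left, mform_comm (lclass r), mform_lclass]
    ring
  have hpL : mform r p (lclass r) = β 0 * β 0 - mform r β β := by
    rw [mform_sub_left, mform_smul_left, mform_smul_left, mform_lclass, mform_lclass]
    simp [lclass]
  have hpp : mform r p p = -mform r β β * mform r p (lclass r) := by
    calc mform r p p = mform r p (β 0 • β - mform r β β • lclass r) := rfl
      _ = _ := by rw [mform_sub_right, mform_smul_right, mform_smul_right, hpβ]; ring
  refine ⟨p, ?_, hpβ⟩
  rw [hpp, hpL]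
  exact mul_pos (neg_pos.2 hββ) (by nlinarith [mul_self_nonneg (β 0)])

lemma exists_causal_orthogonal {α β : Fin (r + 1) → ℝ} (hββ : mform r β β < 0)
    (hD : mform r α β ^ 2 ≤ mform r α α * mform r β β) :
    ∃ δ ≠ 0, 0 ≤ mform r δ δ ∧ mform r δ β = 0 ∧ mform r δ α = 0 := by
  obtain ⟨p, hpp, hpβ⟩ := exists_timelike_orthogonal hββ
  -- `⟨β,β⟩` times the projection of `α` onto `β^⊥`
  set a := mform r β β • α - mform r α β • β
  have haβ : mform r a β = 0 := by
    simp only [a, mform_sub_left, mform_smul_left]; ring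
  have haa : mform r a a = mform r β β * (mform r α α * mform r β β - mform r α β ^ 2) := by
    simp only [a, mform_sub_left, mform_sub_right, mform_smul_left, mform_smul_right,
      mform_comm β α]
    ring
  have horth : ∀ δ, mform r δ β = 0 → mform r δ a = 0 → mform r δ α = 0 := by
    intro δ hδβ hδa
    simp only [a, mform_sub_right, mform_smul_right, hδβ] at hδa
    simpa [hββ.ne] using hδa
  rcases hD.lt_or_eq with hlt | heq
  · -- `⟨a,a⟩` times the projection of `p` onto `a^⊥`
    set δ := mform r a a • p - mform r a p • a
    have hδa : mform r δ a = 0 := by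
      simp only [δ, mform_sub_left, mform_smul_left, mform_comm p a]; ring
    have hδβ : mform r δ β = 0 := by
      simp only [δ, mform_sub_left, mform_smul_left, hpβ, haβ]; ring
    have hδδ : 0 < mform r δ δ := by
      have haa_neg : mform r a a < 0 := by
        rw [haa]; exact mul_neg_of_neg_of_pos hββ (by linarith)
      have hval : mform r δ δ =
          mform r a a * (mform r a a * mform r p p - mform r a p ^ 2) := by
        simp only [δ, mform_sub_left, mform_sub_right, mform_smul_left, mform_smul_right,
          mform_comm p a]
        ring
      rw [hval]
      exact mul_pos_of_neg_of_neg haa_neg (by nlinarith [sq_nonneg (mform r a p)])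
    exact ⟨δ, ne_zero_of_mform_self_pos hδδ, hδδ.le, hδβ, horth δ hδβ hδa⟩
  · by_cases ha0 : a = 0
    · exact ⟨p, ne_zero_of_mform_self_pos hpp, hpp.le, hpβ, horth p hpβ (by simp [ha0, mform])⟩
    · have haa0 : mform r a a = 0 := by rw [haa, heq, sub_self, mul_zero]
      exact ⟨a, ha0, haa0.ge, haβ, horth a haβ haa0⟩

lemma exists_mem_Qbar_orthogonal {α β : Fin (r + 1) → ℝ} (hββ : mform r β β < 0)
    (hD : mform r α β ^ 2 ≤ mform r α α * mform r β β) :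
    ∃ δ ≠ 0, δ ∈ Qbar r ∧ mform r δ β = 0 ∧ mform r δ α = 0 := by
  obtain ⟨δ, hδ0, hδδ, hδβ, hδα⟩ := exists_causal_orthogonal hββ hD
  rcases le_total 0 (mform r δ (lclass r)) with hδL | hδL
  · exact ⟨δ, hδ0, ⟨hδδ, hδL⟩, hδβ, hδα⟩
  · refine ⟨-δ, neg_ne_zero.2 hδ0, ⟨?_, ?_⟩, ?_, ?_⟩ <;>
      simp [mform_neg_left, mform_neg_right, *]

theorem stmt1_general (r : ℕ) (α β γ : Fin (r + 1) → ℝ)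
    (hββ : mform r β β < 0) (hαβ : mform r α β < 0)
    (hγγ : 0 < mform r γ γ) (hγL : 0 < mform r γ (lclass r))
    (hαγ : mform r α γ ≤ 0) (hβγ : 0 ≤ mform r β γ) :
    ((β ∈ interior {x : Fin (r + 1) → ℝ | ∃ q ∈ Qbar r, ∃ t : ℝ, 0 ≤ t ∧ x = q + t • α}) ↔
      (∃ t₁ t₂ : ℝ, t₁ ≠ t₂ ∧ mform r (t₁ • β - α) (t₁ • β - α) = 0 ∧
        mform r (t₂ • β - α) (t₂ • β - α) = 0)) ∧
    ((∃ t₁ t₂ : ℝ, t₁ ≠ t₂ ∧ mform r (t₁ • β - α) (t₁ • β - α) = 0 ∧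
        mform r (t₂ • β - α) (t₂ • β - α) = 0) ↔
      (∀ δ : Fin (r + 1) → ℝ, δ ≠ 0 → 0 ≤ mform r δ δ → 0 ≤ mform r δ (lclass r) →
        mform r δ β = 0 → mform r δ α < 0)) := by
  have hroots : (∃ t₁ t₂ : ℝ, t₁ ≠ t₂ ∧ mform r (t₁ • β - α) (t₁ • β - α) = 0 ∧
      mform r (t₂ • β - α) (t₂ • β - α) = 0) ↔
      mform r α α * mform r β β < mform r α β ^ 2 := by
    simp only [mform_self_sub_smul]
    rw [exists_ne_quadratic_eq_zero_iff hββ.ne, discrim]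
    constructor <;> intro h <;> linarith
  have hdisc_interior := mem_interior_QbarAddRay hββ hαβ ⟨hγγ, hγL⟩ hαγ hβγ
  have hinterior_orth : β ∈ interior (QbarAddRay r α) → ∀ δ : Fin (r + 1) → ℝ, δ ≠ 0 →
      0 ≤ mform r δ δ → 0 ≤ mform r δ (lclass r) → mform r δ β = 0 → mform r δ α < 0 :=
    fun hβ δ hδ0 hδδ hδL hδβ => mform_neg_of_mem_interior_QbarAddRay hβ hδ0 ⟨hδδ, hδL⟩ hδβ
  have horth_disc : (∀ δ : Fin (r + 1) → ℝ, δ ≠ 0 → 0 ≤ mform r δ δ →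
      0 ≤ mform r δ (lclass r) → mform r δ β = 0 → mform r δ α < 0) →
      mform r α α * mform r β β < mform r α β ^ 2 := by
    intro h
    by_contra! hD
    obtain ⟨δ, hδ0, hδ, hδβ, hδα⟩ := exists_mem_Qbar_orthogonal hββ hD
    exact (h δ hδ0 hδ.1 hδ.2 hδβ).ne hδα
  exact ⟨⟨fun hβ => hroots.2 (horth_disc (hinterior_orth hβ)),
      fun h => hdisc_interior (hroots.1 h)⟩,
    ⟨fun h => hinterior_orth (hdisc_interior (hroots.1 h)), fun h => hroots.2 (horth_disc h)⟩⟩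

theorem stmt1 (r : ℕ) (hr : 1 ≤ r) (α β γ : Fin (r + 1) → ℝ)
    (hαα : mform r α α < 0) (hββ : mform r β β < 0) (hαβ : mform r α β < 0)
    (hγγ : 0 < mform r γ γ) (hγL : 0 < mform r γ (lclass r))
    (hαγ : mform r α γ ≤ 0) (hβγ : 0 ≤ mform r β γ) :
    ((β ∈ interior {x : Fin (r + 1) → ℝ | ∃ q ∈ Qbar r, ∃ t : ℝ, 0 ≤ t ∧ x = q + t • α}) ↔
      (∃ t₁ t₂ : ℝ, t₁ ≠ t₂ ∧ mform r (t₁ • β - α) (t₁ • β - α) = 0 ∧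
        mform r (t₂ • β - α) (t₂ • β - α) = 0)) ∧
    ((∃ t₁ t₂ : ℝ, t₁ ≠ t₂ ∧ mform r (t₁ • β - α) (t₁ • β - α) = 0 ∧
        mform r (t₂ • β - α) (t₂ • β - α) = 0) ↔
      (∀ δ : Fin (r + 1) → ℝ, δ ≠ 0 → 0 ≤ mform r δ δ → 0 ≤ mform r δ (lclass r) →
        mform r δ β = 0 → mform r δ α < 0)) :=
  stmt1_general r α β γ hββ hαβ hγγ hγL hαγ hβγ
end

section
/- Assume r > 10 and let e ∈ V satisfy ⟨e,e⟩ = −1 and ⟨e,K⟩ = −1. Then e does not lie in the cone Q̄ + ℝ_{≥0}·K: there exist no q ∈ Q̄ and t ≥ 0 with e = q + tK. (Every (−1)-class lies in the complement of the shade Q + ℝ_{≥0}·K.) -/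
open scoped BigOperators

/-! Writing `q = e - t • K` and expanding with `K² = 9 - r`, `⟨e,K⟩ = e² = -1` gives
`q² = -1 + 2t - (r - 9) t²`, a quadratic in `t` of discriminant `4 (10 - r) < 0`;
so `q² < 0` and `q ∉ Q̄`. -/

noncomputable def mformBilin (r : ℕ) : LinearMap.BilinForm ℝ (Fin (r + 1) → ℝ) :=
  LinearMap.mk₂ ℝ (mform r)
    (fun a b c => by simp only [mform, Pi.add_apply, add_mul, Finset.sum_add_distrib]; ring)
    (fun t a b => by
      simp only [mform, Pi.smul_apply, smul_eq_mul, Finset.mul_sum, mul_assoc, mul_sub])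
    (fun a b c => by simp only [mform, Pi.add_apply, mul_add, Finset.sum_add_distrib]; ring)
    (fun t a b => by
      simp only [mform, Pi.smul_apply, smul_eq_mul, Finset.mul_sum, mul_sub, mul_left_comm])

@[simp]
theorem mformBilin_apply (r : ℕ) (u v : Fin (r + 1) → ℝ) : mformBilin r u v = mform r u v :=
  rfl

theorem mformBilin_isSymm (r : ℕ) : (mformBilin r).IsSymm :=
  ⟨fun u v => by simp only [mformBilin_apply, mform, mul_comm]⟩

theorem mform_kclass_self (r : ℕ) : mform r (kclass r) (kclass r) = 9 - r := by
  norm_num [mform, kclass, Fin.succ_ne_zero]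

theorem neg_one_add_two_mul_sub_mul_sq_neg {s : ℝ} (hs : 1 < s) (t : ℝ) :
    -1 + 2 * t - s * t ^ 2 < 0 := by
  nlinarith [sq_nonneg (s * t - 1)]

namespace LinearMap.BilinForm

variable {M : Type*} [AddCommGroup M] [Module ℝ M] {B : LinearMap.BilinForm ℝ M}

theorem IsSymm.apply_sub_smul_self (hB : B.IsSymm) (e k : M) (t : ℝ) :
    B (e - t • k) (e - t • k) = B e e - 2 * t * B e k + t ^ 2 * B k k := by
  simp only [map_sub, map_smul, LinearMap.sub_apply, LinearMap.smul_apply, smul_eq_mul,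
    hB.eq k e]
  ring

theorem IsSymm.apply_sub_smul_self_neg (hB : B.IsSymm) {e k : M}
    {s : ℝ} (hs : 1 < s) (hkk : B k k = -s) (hee : B e e = -1) (hek : B e k = -1) (t : ℝ) :
    B (e - t • k) (e - t • k) < 0 := by
  rw [hB.apply_sub_smul_self, hkk, hee, hek]
  linarith [neg_one_add_two_mul_sub_mul_sq_neg hs t]

end LinearMap.BilinForm

theorem stmt10 (r : ℕ) (hr : 10 < r) (e : Fin (r + 1) → ℝ)
    (hee : mform r e e = -1) (heK : mform r e (kclass r) = -1) :
    ¬ ∃ q ∈ Qbar r, ∃ t : ℝ, 0 ≤ t ∧ e = q + t • kclass r := by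
  rintro ⟨q, ⟨hqq, -⟩, t, -, rfl⟩
  have hs : 1 < (r : ℝ) - 9 := by
    have : (11 : ℝ) ≤ r := by exact_mod_cast hr
    linarith
  have hkk : mformBilin r (kclass r) (kclass r) = -((r : ℝ) - 9) := by
    rw [mformBilin_apply, mform_kclass_self]; ring
  have hneg := (mformBilin_isSymm r).apply_sub_smul_self_neg hs hkk hee heK t
  rw [add_sub_cancel_right, mformBilin_apply] at hneg
  exact hqq.not_gt hneg
end
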